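/- arXiv:2501.15785 — 2 statements merged into one kernel-verified Lean document; each statement's English description precedes it below -/
import Mathlib

section
/- Let x₀¹,…,x₀ᴺ ∈ H (a real Hilbert space), let ω₁(y,s),…,ω_N(y,s) be nonnegative weights summing to 1, and let y : [s₀,∞) → H solve y'(s) = −(y(s) − Σₙ ωₙ(y(s),s) x₀ⁿ) with y(s₀) = x_T. Then for any fixed point z ∈ H and all s ≥ s₀: ‖y(s) − z‖ ≤ max{‖x_T − z‖, ‖x₀¹ − z‖, …, ‖x₀ᴺ − z‖}, and limsup as s → ∞ of ‖y(s) − z‖ ≤ max over n of ‖x₀ⁿ − z‖. -/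
/-!
Multiplying by the integrating factor `exp s` gives
`(exp s • (y s - z))' = exp s • (y_N - z)`, and `y_N - z` is a convex combination of the
`x₀ⁿ - z`, so its norm is at most `M = maxₙ ‖x₀ⁿ - z‖`. Integrating,
`‖y s - z‖ ≤ e^{-(s - s₀)} ‖x_T - z‖ + (1 - e^{-(s - s₀)}) M`, a convex combination of
`‖x_T - z‖` and `M` whose weight on `‖x_T - z‖` decays to `0`.
-/

open Real Set Filter Topology

section Relaxation

variable {E : Type*} [NormedAddCommGroup E] [NormedSpace ℝ E]

theorem norm_sum_smul_sub_le {ι : Type*} (t : Finset ι) {w : ι → ℝ} {x : ι → E} {z : E} {M : ℝ}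
    (hw₀ : ∀ i ∈ t, 0 ≤ w i) (hw₁ : ∑ i ∈ t, w i = 1) (hx : ∀ i ∈ t, ‖x i - z‖ ≤ M) :
    ‖∑ i ∈ t, w i • x i - z‖ ≤ M :=
  mem_closedBall_iff_norm.1 <|
    (convex_closedBall z M).sum_mem hw₀ hw₁ fun i hi => mem_closedBall_iff_norm.2 (hx i hi)

theorem hasDerivAt_exp_smul_sub {y : ℝ → E} {g : E} {s : ℝ} (hy : HasDerivAt y (-(y s - g)) s)
    (z : E) : HasDerivAt (fun τ => exp τ • (y τ - z)) (exp s • (g - z)) s :=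
  ((hasDerivAt_exp s).smul (hy.sub_const z)).congr_deriv (by module)

variable {y g : ℝ → E} {z : E} {M s₀ s : ℝ}

theorem exp_mul_norm_sub_le_of_hasDerivAt (hy : ∀ τ ≥ s₀, HasDerivAt y (-(y τ - g τ)) τ)
    (hg : ∀ τ ≥ s₀, ‖g τ - z‖ ≤ M) (hs : s₀ ≤ s) :
    exp s * ‖y s - z‖ ≤ exp s₀ * ‖y s₀ - z‖ + (exp s - exp s₀) * M := by
  have hderiv : ∀ τ ≥ s₀, HasDerivAt (fun τ => exp τ • (y τ - z)) (exp τ • (g τ - z)) τ :=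
    fun τ hτ => hasDerivAt_exp_smul_sub (hy τ hτ) z
  have hbound := image_norm_le_of_norm_deriv_right_le_deriv_boundary
    (B := fun τ => exp s₀ * ‖y s₀ - z‖ + (exp τ - exp s₀) * M)
    (fun τ hτ => (hderiv τ hτ.1).continuousAt.continuousWithinAt)
    (fun τ hτ => (hderiv τ hτ.1).hasDerivWithinAt) (by simp [norm_smul])
    (fun τ => (((hasDerivAt_exp τ).sub_const _).mul_const M).const_add _)
    (fun τ hτ => by
      rw [norm_smul, norm_of_nonneg (exp_pos τ).le]
      exact mul_le_mul_of_nonneg_left (hg τ hτ.1) (exp_pos τ).le)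
    (right_mem_Icc.2 hs)
  simpa [norm_smul] using hbound

theorem norm_sub_le_of_hasDerivAt (hy : ∀ τ ≥ s₀, HasDerivAt y (-(y τ - g τ)) τ)
    (hg : ∀ τ ≥ s₀, ‖g τ - z‖ ≤ M) (hs : s₀ ≤ s) :
    ‖y s - z‖ ≤ exp (-(s - s₀)) * ‖y s₀ - z‖ + (1 - exp (-(s - s₀))) * M := by
  have h := exp_mul_norm_sub_le_of_hasDerivAt hy hg hs
  rw [exp_neg, exp_sub, ← mul_le_mul_iff_of_pos_left (exp_pos s)]
  field_simp
  linarith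

theorem norm_sub_le_max_of_hasDerivAt (hy : ∀ τ ≥ s₀, HasDerivAt y (-(y τ - g τ)) τ)
    (hg : ∀ τ ≥ s₀, ‖g τ - z‖ ≤ M) (hs : s₀ ≤ s) :
    ‖y s - z‖ ≤ max ‖y s₀ - z‖ M :=
  (norm_sub_le_of_hasDerivAt hy hg hs).trans <|
    Convex.combo_le_max _ _ (exp_pos _).le (by simpa using hs) (add_sub_cancel _ _)

theorem limsup_norm_sub_le_of_hasDerivAt (hy : ∀ τ ≥ s₀, HasDerivAt y (-(y τ - g τ)) τ)
    (hg : ∀ τ ≥ s₀, ‖g τ - z‖ ≤ M) :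
    limsup (fun s => ‖y s - z‖) atTop ≤ M := by
  have hdecay : Tendsto (fun s => exp (-(s - s₀))) atTop (𝓝 0) :=
    tendsto_exp_neg_atTop_nhds_zero.comp (tendsto_atTop_add_const_right _ (-s₀) tendsto_id)
  have hlim : Tendsto (fun s => exp (-(s - s₀)) * ‖y s₀ - z‖ + (1 - exp (-(s - s₀))) * M)
      atTop (𝓝 M) := by
    simpa using (hdecay.mul_const ‖y s₀ - z‖).add
      (((tendsto_const_nhds (x := 1)).sub hdecay).mul_const M)
  calc limsup (fun s => ‖y s - z‖) atTop
      ≤ limsup (fun s => exp (-(s - s₀)) * ‖y s₀ - z‖ + (1 - exp (-(s - s₀))) * M) atTop :=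
        limsup_le_limsup
          (eventually_ge_atTop s₀ |>.mono fun s hs => norm_sub_le_of_hasDerivAt hy hg hs)
          (isCoboundedUnder_le_of_le atTop fun s => norm_nonneg _) hlim.isBoundedUnder_le
    _ = M := hlim.limsup_eq

end Relaxation

theorem stmt7_general {H : Type*} [NormedAddCommGroup H] [InnerProductSpace ℝ H]
    {N : ℕ} (x0 : Fin N → H)
    (ω : Fin N → H → ℝ → ℝ)
    (hω0 : ∀ n y s, 0 ≤ ω n y s)
    (hω1 : ∀ y s, ∑ n, ω n y s = 1)
    (s0 : ℝ) (xT : H) (y : ℝ → H)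
    (hy0 : y s0 = xT)
    (hode : ∀ s ≥ s0, HasDerivAt y (-(y s - ∑ n, ω n (y s) s • x0 n)) s)
    (z : H) :
    (∀ s ≥ s0, ‖y s - z‖ ≤ max ‖xT - z‖ (⨆ n, ‖x0 n - z‖)) ∧
    Filter.limsup (fun s => ‖y s - z‖) Filter.atTop ≤ ⨆ n, ‖x0 n - z‖ := by
  have hcomb : ∀ s ≥ s0, ‖∑ n, ω n (y s) s • x0 n - z‖ ≤ ⨆ n, ‖x0 n - z‖ := fun s _ =>
    norm_sum_smul_sub_le _ (fun n _ => hω0 n (y s) s) (hω1 (y s) s)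
      fun n _ => le_ciSup (Set.finite_range fun n => ‖x0 n - z‖).bddAbove n
  subst hy0
  exact ⟨fun s hs => norm_sub_le_max_of_hasDerivAt hode hcomb hs,
    limsup_norm_sub_le_of_hasDerivAt hode hcomb⟩

theorem stmt7 {H : Type*} [NormedAddCommGroup H] [InnerProductSpace ℝ H]
    [CompleteSpace H]
    {N : ℕ} (hN : 0 < N) (x0 : Fin N → H)
    (ω : Fin N → H → ℝ → ℝ)
    (hω0 : ∀ n y s, 0 ≤ ω n y s)
    (hω1 : ∀ y s, ∑ n, ω n y s = 1)
    (s0 : ℝ) (xT : H) (y : ℝ → H)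
    (hy0 : y s0 = xT)
    (hode : ∀ s ≥ s0, HasDerivAt y (-(y s - ∑ n, ω n (y s) s • x0 n)) s)
    (z : H) :
    (∀ s ≥ s0, ‖y s - z‖ ≤ max ‖xT - z‖ (⨆ n, ‖x0 n - z‖)) ∧
    Filter.limsup (fun s => ‖y s - z‖) Filter.atTop ≤ ⨆ n, ‖x0 n - z‖ :=
  stmt7_general x0 ω hω0 hω1 s0 xT y hy0 hode z
end

section
/- Let x₀¹,…,x₀ᴺ ∈ ℝᵈ be distinct with minimum pairwise distance D₋, maximum pairwise distance D⁺, and |x|_∞ = maxₙ|x₀ⁿ|. Fix n, δ ∈ (0,D₋), r > |x|_∞, and suppose s ≥ s_D where 1 − √(1 − e^{−2s_D}) < δ²/(8D⁺r). Then for y ∈ V_δ(x₀ⁿ) ∩ B(0,r) and ℓ ≠ n, writing m(s) = √(1 − e^{−2s}), one has |y − m(s)x₀ⁿ|² − |y − m(s)x₀ˡ|² ≤ −δ²/2, and hence the normalized Gaussian weight ω_ℓ(y,s) = exp(−e^{2s}|y − m(s)x₀ˡ|²/2)/Σₘ exp(−e^{2s}|y − m(s)x₀ᵐ|²/2) satisfies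 ω_ℓ(y,s) < exp(−e^{2s}δ²/4). -/
/-!
For `a = x₀ⁿ`, `b = x₀ˡ`, expanding the squares gives
`‖y - m a‖² - ‖y - m b‖² = m (‖y - a‖² - ‖y - b‖²) + m (m - 1) (‖a‖² - ‖b‖²)`.
On the Voronoi cell the first bracket is below `-δ²`, and since `‖b‖² - ‖a‖² ≤ 2 D⁺ r` the
correction is at most `(1 - m) · 2 D⁺ r < δ²/4`. As `δ < D₋ ≤ ‖a - b‖ < 2r` also gives
`δ² < 2 D⁺ r`, we get `m > 3/4`, so the difference is at most `-3δ²/4 + δ²/4`. The weight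
bound follows by comparing the sum of the Gaussian weights with the single weight of `x₀ⁿ`.
-/

open Real

theorem sq_norm_sub_sq_norm_le {E : Type*} [SeminormedAddCommGroup E] (a b : E) :
    ‖a‖ ^ 2 - ‖b‖ ^ 2 ≤ ‖a - b‖ * (‖a‖ + ‖b‖) := by
  have hfac : ‖a‖ ^ 2 - ‖b‖ ^ 2 = (‖a‖ - ‖b‖) * (‖a‖ + ‖b‖) := by ring
  rw [hfac]
  exact mul_le_mul_of_nonneg_right (norm_sub_norm_le a b) (by positivity)

section InnerProductSpace

variable {E : Type*} [NormedAddCommGroup E] [InnerProductSpace ℝ E]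

theorem norm_sub_smul_sq_sub_norm_sub_smul_sq (y a b : E) (m : ℝ) :
    ‖y - m • a‖ ^ 2 - ‖y - m • b‖ ^ 2
      = m * (‖y - a‖ ^ 2 - ‖y - b‖ ^ 2) + m * (m - 1) * (‖a‖ ^ 2 - ‖b‖ ^ 2) := by
  simp only [norm_sub_sq_real, real_inner_smul_right, norm_smul, Real.norm_eq_abs, mul_pow,
    sq_abs]
  ring

theorem norm_sub_smul_sq_sub_norm_sub_smul_sq_le {y a b : E} {m δ R : ℝ}
    (hm : 3 / 4 ≤ m) (hm1 : m ≤ 1) (hy : ‖y - a‖ ^ 2 < ‖y - b‖ ^ 2 - δ ^ 2)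
    (hR : ‖b‖ ^ 2 - ‖a‖ ^ 2 ≤ R) (hgap : (1 - m) * R ≤ δ ^ 2 / 4) :
    ‖y - m • a‖ ^ 2 - ‖y - m • b‖ ^ 2 ≤ -δ ^ 2 / 2 := by
  rw [norm_sub_smul_sq_sub_norm_sub_smul_sq]
  have hmain : m * (‖y - a‖ ^ 2 - ‖y - b‖ ^ 2) ≤ 3 / 4 * -δ ^ 2 := by
    nlinarith [sq_nonneg δ]
  have hcorr : m * (m - 1) * (‖a‖ ^ 2 - ‖b‖ ^ 2) ≤ δ ^ 2 / 4 := by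
    nlinarith [mul_nonneg (by linarith : (0 : ℝ) ≤ m) (by linarith : (0 : ℝ) ≤ 1 - m),
      sq_nonneg δ]
  linarith

end InnerProductSpace

theorem exp_div_sum_exp_lt_exp_sub {ι : Type*} [Fintype ι] (f : ι → ℝ) {i j : ι} (hij : i ≠ j) :
    exp (f i) / ∑ k, exp (f k) < exp (f i - f j) := by
  have hsum : exp (f j) < ∑ k, exp (f k) :=
    Finset.single_lt_sum hij (Finset.mem_univ j) (Finset.mem_univ i) (exp_pos _)
      fun k _ _ ↦ (exp_pos _).le
  rw [exp_sub]
  exact div_lt_div_of_pos_left (exp_pos _) (exp_pos _) hsum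

theorem monotone_sqrt_one_sub_exp_neg_two_mul : Monotone fun s : ℝ ↦ √(1 - exp (-(2 * s))) :=
  fun s t hst ↦ sqrt_le_sqrt (by linarith [exp_le_exp.2 (by linarith : -(2 * t) ≤ -(2 * s))])

theorem stmt18_general {d N : ℕ} (x0 : Fin N → EuclideanSpace ℝ (Fin d))
    (Dm Dp r : ℝ)
    (hsep : ∀ i j, i ≠ j → Dm ≤ ‖x0 i - x0 j‖)
    (hDp : ∀ i j, ‖x0 i - x0 j‖ ≤ Dp) (hDp0 : 0 < Dp)
    (hr : ∀ i, ‖x0 i‖ < r)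
    (n : Fin N) (δ : ℝ) (hδ : 0 < δ) (hδD : δ < Dm)
    (sD s : ℝ)
    (hsD : 1 - Real.sqrt (1 - Real.exp (-(2*sD))) < δ^2 / (8 * Dp * r))
    (hs : sD ≤ s)
    (y : EuclideanSpace ℝ (Fin d))
    (hy : ∀ ℓ, ℓ ≠ n → ‖y - x0 n‖^2 < ‖y - x0 ℓ‖^2 - δ^2) :
    let ms := Real.sqrt (1 - Real.exp (-(2*s)))
    let wt : Fin N → ℝ := fun ℓ =>
      Real.exp (-(Real.exp (2*s)) * ‖y - ms • x0 ℓ‖^2 / 2)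
    ∀ ℓ, ℓ ≠ n →
      ‖y - ms • x0 n‖^2 - ‖y - ms • x0 ℓ‖^2 ≤ -δ^2/2 ∧
      wt ℓ / (∑ m, wt m) < Real.exp (-(Real.exp (2*s)) * δ^2 / 4) := by
  intro ms wt ℓ hℓ
  have hr0 : 0 < r := (norm_nonneg _).trans_lt (hr n)
  have hms1 : ms ≤ 1 := sqrt_le_one.2 (by linarith [exp_nonneg (-(2 * s))])
  have hgap : (1 - ms) * (8 * Dp * r) < δ ^ 2 :=
    (lt_div_iff₀ (by positivity)).1 (by linarith [monotone_sqrt_one_sub_exp_neg_two_mul hs])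
  have hnorms : ‖x0 ℓ‖ ^ 2 - ‖x0 n‖ ^ 2 ≤ Dp * (2 * r) :=
    (sq_norm_sub_sq_norm_le _ _).trans
      (mul_le_mul (hDp ℓ n) (by linarith [hr ℓ, hr n]) (by positivity) hDp0.le)
  have hδ2 : δ ^ 2 < Dp * (2 * r) := by
    have hsepn := hsep n ℓ (Ne.symm hℓ)
    have hdist := (norm_sub_le (x0 n) (x0 ℓ)).trans_lt (add_lt_add (hr n) (hr ℓ))
    nlinarith [hDp n ℓ]
  have hdiff : ‖y - ms • x0 n‖ ^ 2 - ‖y - ms • x0 ℓ‖ ^ 2 ≤ -δ ^ 2 / 2 :=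
    norm_sub_smul_sq_sub_norm_sub_smul_sq_le (by nlinarith) hms1 (hy ℓ hℓ) hnorms (by linarith)
  refine ⟨hdiff, ?_⟩
  calc wt ℓ / ∑ m, wt m
      < exp (-exp (2 * s) * ‖y - ms • x0 ℓ‖ ^ 2 / 2 - -exp (2 * s) * ‖y - ms • x0 n‖ ^ 2 / 2) :=
        exp_div_sum_exp_lt_exp_sub (fun k ↦ -exp (2 * s) * ‖y - ms • x0 k‖ ^ 2 / 2) hℓ
    _ ≤ exp (-exp (2 * s) * δ ^ 2 / 4) := exp_le_exp.2 (by nlinarith [exp_pos (2 * s)])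

theorem stmt18 {d N : ℕ} (x0 : Fin N → EuclideanSpace ℝ (Fin d))
    (Dm Dp r : ℝ)
    (hsep : ∀ i j, i ≠ j → Dm ≤ ‖x0 i - x0 j‖)
    (hDp : ∀ i j, ‖x0 i - x0 j‖ ≤ Dp) (hDp0 : 0 < Dp)
    (hr : ∀ i, ‖x0 i‖ < r)
    (n : Fin N) (δ : ℝ) (hδ : 0 < δ) (hδD : δ < Dm)
    (sD s : ℝ)
    (hsD : 1 - Real.sqrt (1 - Real.exp (-(2*sD))) < δ^2 / (8 * Dp * r))
    (hs : sD ≤ s)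
    (y : EuclideanSpace ℝ (Fin d)) (hyr : ‖y‖ < r)
    (hy : ∀ ℓ, ℓ ≠ n → ‖y - x0 n‖^2 < ‖y - x0 ℓ‖^2 - δ^2) :
    let ms := Real.sqrt (1 - Real.exp (-(2*s)))
    let wt : Fin N → ℝ := fun ℓ =>
      Real.exp (-(Real.exp (2*s)) * ‖y - ms • x0 ℓ‖^2 / 2)
    ∀ ℓ, ℓ ≠ n →
      ‖y - ms • x0 n‖^2 - ‖y - ms • x0 ℓ‖^2 ≤ -δ^2/2 ∧
      wt ℓ / (∑ m, wt m) < Real.exp (-(Real.exp (2*s)) * δ^2 / 4) :=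
  stmt18_general x0 Dm Dp r hsep hDp hDp0 hr n δ hδ hδD sD s hsD hs y hy
end
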